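/- arXiv:2407.01974 — 2 statements merged into one kernel-verified Lean document; each statement's English description precedes it below -/
import Mathlib

section
/- Let N be a square-integrable random k×k matrix with E[vec(N)] = η vec(Σ) and var(vec(N)) = σ₁ (I_{k²} + K_{k,k})(Σ ⊗ Σ) + σ₂ vec(Σ) vec(Σ)ᵀ, where Σ = V(θ₀) with V linear and L (the matrix of vec's of the symmetric partial derivatives L_j = ∂V/∂θ_j) of full column rank. Define M by vec(M) = Π_L vec(N) with Π_L = L (Lᵀ (Σ⁻¹ ⊗ Σ⁻¹) L)⁻¹ Lᵀ (Σ⁻¹ ⊗ Σ⁻¹). Then E[vec(M)] = η vec(Σ) and var(vec(M)) = 2σ₁ L (Lᵀ (Σ⁻¹ ⊗ Σ⁻¹) L)⁻¹ Lᵀ + σ₂ vec(Σ) vec(Σ)ᵀ. -/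
open Matrix MeasureTheory
open scoped Kronecker

/-!
`Π_L` fixes the column space of `L`. That space contains `vec Σ = L θ₀`, and `K` fixes it
because the `L_j` are symmetric. With `W = Σ⁻¹ ⊗ Σ⁻¹ = (Σ ⊗ Σ)⁻¹` one has
`(Σ ⊗ Σ) Π_Lᵀ = L (Lᵀ W L)⁻¹ Lᵀ`, so conjugating the variance by `Π_L` turns both `Σ ⊗ Σ` and
`K (Σ ⊗ Σ)` into `L (Lᵀ W L)⁻¹ Lᵀ` and leaves `vec Σ vec Σᵀ` unchanged. `Lᵀ W L` is invertible
because `W` is positive definite and `L` is injective.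
-/

/-- `vecm M` stacks the columns of `M` into a vector: `vecm M (j, i) = M i j`. -/
def vecm {k : ℕ} (M : Matrix (Fin k) (Fin k) ℝ) : Fin k × Fin k → ℝ :=
  fun p => M p.2 p.1

namespace Matrix

theorem mulVec_injective_of_rank_eq_card {K m n : Type*} [Field K] [Fintype m] [Fintype n]
    {A : Matrix m n K} (h : A.rank = Fintype.card n) : Function.Injective A.mulVec := by
  have hsum := A.mulVecLin.finrank_range_add_finrank_ker
  rw [Module.finrank_fintype_fun_eq_card] at hsum
  have hker : Module.finrank K (LinearMap.ker A.mulVecLin) = 0 := by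
    change A.rank + _ = _ at hsum
    omega
  exact LinearMap.ker_eq_bot.mp (Submodule.finrank_eq_zero.mp hker)

section WeightedProjection

variable {R ι κ : Type*} [CommRing R] [Fintype ι] [Fintype κ] [DecidableEq κ]

/-- The paper's `Π_L`: the `W`-orthogonal projection onto the column space of `L`. -/
noncomputable def weightedProjection (W : Matrix ι ι R) (L : Matrix ι κ R) : Matrix ι ι R :=
  L * (Lᵀ * W * L)⁻¹ * Lᵀ * W

variable {W : Matrix ι ι R} {L : Matrix ι κ R}

theorem weightedProjection_mul_self (hB : IsUnit (Lᵀ * W * L).det) :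
    weightedProjection W L * L = L := by
  calc weightedProjection W L * L = L * ((Lᵀ * W * L)⁻¹ * (Lᵀ * W * L)) := by
        simp only [weightedProjection, Matrix.mul_assoc]
    _ = L := by rw [nonsing_inv_mul _ hB, Matrix.mul_one]

theorem weightedProjection_mulVec_of_mem_range (hB : IsUnit (Lᵀ * W * L).det) {v : ι → R}
    (hv : v ∈ Set.range L.mulVec) : weightedProjection W L *ᵥ v = v := by
  obtain ⟨θ, rfl⟩ := hv
  rw [mulVec_mulVec, weightedProjection_mul_self hB]

theorem mul_transpose_weightedProjection [DecidableEq ι] (hW : Wᵀ = W) {C : Matrix ι ι R}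
    (hCW : C * W = 1) :
    C * (weightedProjection W L)ᵀ = L * (Lᵀ * W * L)⁻¹ * Lᵀ := by
  have hB : (Lᵀ * W * L)ᵀ = Lᵀ * W * L := by
    simp only [transpose_mul, transpose_transpose, hW, Matrix.mul_assoc]
  simp only [weightedProjection, transpose_mul, transpose_transpose, hW, transpose_nonsing_inv,
    hB, ← Matrix.mul_assoc, hCW, Matrix.one_mul]

theorem weightedProjection_mul_radial_mul_transpose [DecidableEq ι] (hW : Wᵀ = W)
    (hB : IsUnit (Lᵀ * W * L).det) {C K : Matrix ι ι R} (hCW : C * W = 1) (hKL : K * L = L)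
    {v : ι → R} (hv : v ∈ Set.range L.mulVec) (σ₁ σ₂ : R) :
    weightedProjection W L * (σ₁ • ((1 + K) * C) + σ₂ • vecMulVec v v) *
        (weightedProjection W L)ᵀ
      = (2 * σ₁) • (L * (Lᵀ * W * L)⁻¹ * Lᵀ) + σ₂ • vecMulVec v v := by
  set P := weightedProjection W L
  set G := L * (Lᵀ * W * L)⁻¹ * Lᵀ
  have hPG : P * G = G := by
    simp only [G, ← Matrix.mul_assoc]
    rw [weightedProjection_mul_self hB]
  have hKG : K * G = G := by simp only [G, ← Matrix.mul_assoc, hKL]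
  have hCP : C * Pᵀ = G := mul_transpose_weightedProjection hW hCW
  calc P * (σ₁ • ((1 + K) * C) + σ₂ • vecMulVec v v) * Pᵀ
      = σ₁ • (P * (C * Pᵀ) + P * (K * (C * Pᵀ))) + σ₂ • vecMulVec (P *ᵥ v) (P *ᵥ v) := by
        simp only [Matrix.mul_add, Matrix.add_mul, Matrix.mul_smul, Matrix.smul_mul,
          Matrix.one_mul, mul_vecMulVec, vecMulVec_mul, vecMul_transpose, Matrix.mul_assoc,
          smul_add]
    _ = (2 * σ₁) • G + σ₂ • vecMulVec v v := by
        rw [hCP, weightedProjection_mulVec_of_mem_range hB hv, hKG, hPG, two_mul, add_smul,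
          smul_add]

end WeightedProjection

end Matrix

section Vectorization

variable {k l : ℕ}

theorem of_vecm_mulVec (Ls : Fin l → Matrix (Fin k) (Fin k) ℝ) (θ : Fin l → ℝ) :
    (Matrix.of fun p j => vecm (Ls j) p) *ᵥ θ = vecm (∑ j, θ j • Ls j) := by
  ext p
  simp only [mulVec, dotProduct, of_apply, vecm, Matrix.sum_apply, Matrix.smul_apply,
    smul_eq_mul, mul_comm]

theorem mul_of_vecm_of_transpose_eq {K : Matrix (Fin k × Fin k) (Fin k × Fin k) ℝ}
    (hK : ∀ A : Matrix (Fin k) (Fin k) ℝ, K *ᵥ vecm A = vecm Aᵀ)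
    {Ls : Fin l → Matrix (Fin k) (Fin k) ℝ} (hsym : ∀ j, (Ls j)ᵀ = Ls j) :
    K * (Matrix.of fun p j => vecm (Ls j) p) = Matrix.of fun p j => vecm (Ls j) p := by
  ext p j
  have h := congrFun (hK (Ls j)) p
  rw [hsym j] at h
  exact h

end Vectorization

section SecondMoment

noncomputable def secondMomentMatrix {Ω ι : Type*} [MeasurableSpace Ω] (μ : Measure Ω)
    (Y : Ω → ι → ℝ) : Matrix ι ι ℝ :=
  Matrix.of fun p q => ∫ ω, Y ω p * Y ω q ∂μ

variable {ι κ Ω : Type*} [Fintype ι] [MeasurableSpace Ω] {μ : Measure Ω}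

theorem integral_mulVec_apply {X : Ω → ι → ℝ} (hX : ∀ r, Integrable (fun ω => X ω r) μ)
    (A : Matrix κ ι ℝ) (p : κ) :
    ∫ ω, (A *ᵥ X ω) p ∂μ = (A *ᵥ fun r => ∫ ω, X ω r ∂μ) p := by
  simp only [mulVec, dotProduct]
  rw [integral_finsetSum _ fun r _ => (hX r).const_mul _]
  simp only [integral_const_mul]

theorem secondMomentMatrix_mulVec {Y : Ω → ι → ℝ} (hY : ∀ r, MemLp (fun ω => Y ω r) 2 μ)
    (A : Matrix κ ι ℝ) :
    secondMomentMatrix μ (fun ω => A *ᵥ Y ω) = A * secondMomentMatrix μ Y * Aᵀ := by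
  have hYY : ∀ r s, Integrable (fun ω => Y ω r * Y ω s) μ := fun r s =>
    (hY r).integrable_mul (hY s)
  ext p q
  calc ∫ ω, (A *ᵥ Y ω) p * (A *ᵥ Y ω) q ∂μ
      = ∫ ω, ∑ r, ∑ s, A p r * A q s * (Y ω r * Y ω s) ∂μ := by
        congr 1 with ω
        simp only [mulVec, dotProduct, Finset.sum_mul_sum]
        exact Finset.sum_congr rfl fun r _ => Finset.sum_congr rfl fun s _ => by ring
    _ = ∑ r, ∑ s, A p r * A q s * ∫ ω, Y ω r * Y ω s ∂μ := by
        rw [integral_finsetSum _ fun r _ =>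
          integrable_finsetSum _ fun s _ => (hYY r s).const_mul _]
        refine Finset.sum_congr rfl fun r _ => ?_
        rw [integral_finsetSum _ fun s _ => (hYY r s).const_mul _]
        simp only [integral_const_mul]
    _ = (A * secondMomentMatrix μ Y * Aᵀ) p q := by
        simp only [secondMomentMatrix, mul_apply, of_apply, transpose_apply, Finset.sum_mul]
        rw [Finset.sum_comm]
        exact Finset.sum_congr rfl fun r _ => Finset.sum_congr rfl fun s _ => by ring

end SecondMoment

theorem projected_radial_mean_var_general {k l : ℕ} {Ω : Type*} [MeasurableSpace Ω]
    (μ : Measure Ω) [IsProbabilityMeasure μ]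
    (θ₀ : Fin l → ℝ) (Ls : Fin l → Matrix (Fin k) (Fin k) ℝ)
    (hsym : ∀ j, (Ls j)ᵀ = Ls j)
    (S : Matrix (Fin k) (Fin k) ℝ) (hSdef : S = ∑ j, θ₀ j • Ls j) (hS : S.PosDef)
    (L : Matrix (Fin k × Fin k) (Fin l) ℝ)
    (hLdef : L = Matrix.of fun p j => vecm (Ls j) p)
    (hrank : L.rank = l)
    (K : Matrix (Fin k × Fin k) (Fin k × Fin k) ℝ)
    (hK : ∀ A : Matrix (Fin k) (Fin k) ℝ, K.mulVec (vecm A) = vecm Aᵀ)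
    (N : Ω → Matrix (Fin k) (Fin k) ℝ)
    (hL2 : ∀ p, MemLp (fun ω => vecm (N ω) p) 2 μ)
    (η σ₁ σ₂ : ℝ)
    (hmean : ∀ p, ∫ ω, vecm (N ω) p ∂μ = η * vecm S p)
    (hvar : (Matrix.of fun p q => ∫ ω,
          (vecm (N ω) p - η * vecm S p) * (vecm (N ω) q - η * vecm S q) ∂μ)
        = σ₁ • ((1 + K) * (S ⊗ₖ S)) + σ₂ • vecMulVec (vecm S) (vecm S)) :
    (∀ p, ∫ ω,
        (L * (Lᵀ * (S⁻¹ ⊗ₖ S⁻¹) * L)⁻¹ * Lᵀ * (S⁻¹ ⊗ₖ S⁻¹)).mulVec (vecm (N ω)) p ∂μ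
          = η * vecm S p) ∧
    (Matrix.of fun p q => ∫ ω,
        ((L * (Lᵀ * (S⁻¹ ⊗ₖ S⁻¹) * L)⁻¹ * Lᵀ * (S⁻¹ ⊗ₖ S⁻¹)).mulVec (vecm (N ω)) p
            - η * vecm S p) *
        ((L * (Lᵀ * (S⁻¹ ⊗ₖ S⁻¹) * L)⁻¹ * Lᵀ * (S⁻¹ ⊗ₖ S⁻¹)).mulVec (vecm (N ω)) q
            - η * vecm S q) ∂μ)
      = (2 * σ₁) • (L * (Lᵀ * (S⁻¹ ⊗ₖ S⁻¹) * L)⁻¹ * Lᵀ)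
          + σ₂ • vecMulVec (vecm S) (vecm S) := by
  set W := S⁻¹ ⊗ₖ S⁻¹
  change (∀ p, ∫ ω, (weightedProjection W L *ᵥ vecm (N ω)) p ∂μ = _) ∧
    secondMomentMatrix μ (fun ω => weightedProjection W L *ᵥ vecm (N ω) - η • vecm S) = _
  set P := weightedProjection W L
  have hW : W.PosDef := hS.inv.kronecker hS.inv
  have hWsymm : Wᵀ = W := by simpa using hW.isHermitian.eq
  have hB : IsUnit (Lᵀ * W * L).det := (isUnit_iff_isUnit_det _).mp <| by
    simpa using (hW.conjTranspose_mul_mul_same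
      (mulVec_injective_of_rank_eq_card (hrank.trans (Fintype.card_fin l).symm))).isUnit
  have hSW : (S ⊗ₖ S) * W = 1 := by
    rw [← mul_kronecker_mul, mul_nonsing_inv _ ((isUnit_iff_isUnit_det S).mp hS.isUnit),
      one_kronecker_one]
  have hvecS : vecm S ∈ Set.range L.mulVec := ⟨θ₀, by rw [hLdef, of_vecm_mulVec, hSdef]⟩
  have hPS : P *ᵥ (η • vecm S) = η • vecm S := by
    rw [mulVec_smul, weightedProjection_mulVec_of_mem_range hB hvecS]
  refine ⟨fun p => ?_, ?_⟩
  · rw [integral_mulVec_apply (fun r => (hL2 r).integrable one_le_two), funext hmean]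
    exact congrFun hPS p
  · have hcentred : ∀ ω, P *ᵥ vecm (N ω) - η • vecm S = P *ᵥ (vecm (N ω) - η • vecm S) :=
      fun ω => by rw [mulVec_sub, hPS]
    simp only [hcentred]
    rw [secondMomentMatrix_mulVec (Y := fun ω => vecm (N ω) - η • vecm S)
      fun r => (hL2 r).sub (memLp_const _)]
    rw [show secondMomentMatrix μ (fun ω => vecm (N ω) - η • vecm S) = _ from hvar]
    exact weightedProjection_mul_radial_mul_transpose hWsymm hB hSW
      (hLdef ▸ mul_of_vecm_of_transpose_eq hK hsym) hvecS σ₁ σ₂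

/-- Theorem 1(i): if `N` is a square-integrable random matrix with mean `η vec Σ` and
variance `σ₁ (I + K)(Σ ⊗ Σ) + σ₂ vec Σ vec Σᵀ`, `Σ = V(θ₀)` a linear covariance structure
with `L` of full column rank, then `M` defined by `vec M = Π_L vec N` satisfies
`E[vec M] = η vec Σ` and `var(vec M) = 2σ₁ L (Lᵀ(Σ⁻¹⊗Σ⁻¹)L)⁻¹ Lᵀ + σ₂ vec Σ vec Σᵀ`. -/
theorem projected_radial_mean_var {k l : ℕ} {Ω : Type*} [MeasurableSpace Ω]
    (μ : Measure Ω) [IsProbabilityMeasure μ]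
    (θ₀ : Fin l → ℝ) (Ls : Fin l → Matrix (Fin k) (Fin k) ℝ)
    (hsym : ∀ j, (Ls j)ᵀ = Ls j)
    (S : Matrix (Fin k) (Fin k) ℝ) (hSdef : S = ∑ j, θ₀ j • Ls j) (hS : S.PosDef)
    (L : Matrix (Fin k × Fin k) (Fin l) ℝ)
    (hLdef : L = Matrix.of fun p j => vecm (Ls j) p)
    (hrank : L.rank = l)
    (K : Matrix (Fin k × Fin k) (Fin k × Fin k) ℝ)
    (hK : ∀ A : Matrix (Fin k) (Fin k) ℝ, K.mulVec (vecm A) = vecm Aᵀ)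
    (N : Ω → Matrix (Fin k) (Fin k) ℝ)
    (hmeas : ∀ p, Measurable fun ω => vecm (N ω) p)
    (hL2 : ∀ p, MemLp (fun ω => vecm (N ω) p) 2 μ)
    (η σ₁ σ₂ : ℝ) (hσ₁ : 0 ≤ σ₁) (hσ₂ : -(2 * σ₁) / k ≤ σ₂)
    (hmean : ∀ p, ∫ ω, vecm (N ω) p ∂μ = η * vecm S p)
    (hvar : (Matrix.of fun p q => ∫ ω,
          (vecm (N ω) p - η * vecm S p) * (vecm (N ω) q - η * vecm S q) ∂μ)
        = σ₁ • ((1 + K) * (S ⊗ₖ S)) + σ₂ • vecMulVec (vecm S) (vecm S)) :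
    (∀ p, ∫ ω,
        (L * (Lᵀ * (S⁻¹ ⊗ₖ S⁻¹) * L)⁻¹ * Lᵀ * (S⁻¹ ⊗ₖ S⁻¹)).mulVec (vecm (N ω)) p ∂μ
          = η * vecm S p) ∧
    (Matrix.of fun p q => ∫ ω,
        ((L * (Lᵀ * (S⁻¹ ⊗ₖ S⁻¹) * L)⁻¹ * Lᵀ * (S⁻¹ ⊗ₖ S⁻¹)).mulVec (vecm (N ω)) p
            - η * vecm S p) *
        ((L * (Lᵀ * (S⁻¹ ⊗ₖ S⁻¹) * L)⁻¹ * Lᵀ * (S⁻¹ ⊗ₖ S⁻¹)).mulVec (vecm (N ω)) q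
            - η * vecm S q) ∂μ)
      = (2 * σ₁) • (L * (Lᵀ * (S⁻¹ ⊗ₖ S⁻¹) * L)⁻¹ * Lᵀ)
          + σ₂ • vecMulVec (vecm S) (vecm S) :=
  projected_radial_mean_var_general μ θ₀ Ls hsym S hSdef hS L hLdef hrank K hK N hL2 η σ₁ σ₂ hmean
    hvar
end

section
/- Let P be an elliptical distribution with parameters μ and Σ = V(θ₀), V linear with L of full column rank, and let C be an affine equivariant, Fisher-consistent covariance functional whose influence function is IF(y; C, P) = α_C(d(y)) (y−μ)(y−μ)ᵀ − β_C(d(y)) Σ, where d(y)² = (y−μ)ᵀΣ⁻¹(y−μ). Define M by vec(M) = Π_L vec(C) with Π_L = L(Lᵀ(Σ⁻¹⊗Σ⁻¹)L)⁻¹Lᵀ(Σ⁻¹⊗Σ⁻¹). Then IF(y; vec(M), P) = α_C(d(y)) L (Lᵀ(Σ⁻¹⊗Σ⁻¹)L)⁻¹ Lᵀ vec(Σ⁻¹(y−μ)(y−μ)ᵀΣ⁻¹) − β_C(d(y)) vec(Σ). -/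
/-!
A continuous linear map passes through the difference quotient defining an influence function
and through its limit, so `IF(y; vec M, P) = Π_L IF(y; vec C, P)`. The projection `Π_L` fixes
`vec Σ = L θ₀` because `Π_L L = L`; this needs the Gram matrix `Lᵀ (Σ⁻¹ ⊗ Σ⁻¹) L` to be
invertible, which holds since `Σ⁻¹ ⊗ Σ⁻¹` is positive definite and `L` is injective. Finally the
factor `Σ⁻¹ ⊗ Σ⁻¹` of `Π_L` acts on `vec((y-μ)(y-μ)ᵀ)` as the sandwich `Σ⁻¹ (·) Σ⁻¹`.
-/

open Matrix MeasureTheory Filter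
open scoped Kronecker

/-- `HasIF T P y v`: the statistical functional `T` has influence function value `v` at the
point `y` and distribution `P`, i.e. `(T((1-h)P + hδ_y) - T(P))/h → v` as `h ↓ 0`. -/
def HasIF {α : Type*} [MeasurableSpace α] {V : Type*} [AddCommGroup V] [Module ℝ V]
    [TopologicalSpace V]
    (T : MeasureTheory.Measure α → V) (P : MeasureTheory.Measure α) (y : α) (v : V) : Prop :=
  Tendsto
    (fun h : ℝ => h⁻¹ •
      (T (ENNReal.ofReal (1 - h) • P + ENNReal.ofReal h • MeasureTheory.Measure.dirac y) - T P))
    (nhdsWithin 0 (Set.Ioi 0)) (nhds v)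

section InfluenceFunction

variable {α : Type*} [MeasurableSpace α] {V W : Type*} [AddCommGroup V] [Module ℝ V]
  [TopologicalSpace V] [AddCommGroup W] [Module ℝ W] [TopologicalSpace W]
  {T : Measure α → V} {P : Measure α} {y : α} {v : V}

theorem HasIF.continuousLinearMap_comp (f : V →L[ℝ] W) (h : HasIF T P y v) :
    HasIF (fun Q => f (T Q)) P y (f v) := by
  unfold HasIF at h ⊢
  simpa only [Function.comp_def, map_smul, map_sub] using (f.continuous.tendsto v).comp h

theorem HasIF.mulVec {m n : Type*} [Fintype n]
    {T : Measure α → n → ℝ} {v : n → ℝ} (A : Matrix m n ℝ) (h : HasIF T P y v) :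
    HasIF (fun Q => A *ᵥ T Q) P y (A *ᵥ v) :=
  h.continuousLinearMap_comp (LinearMap.toContinuousLinearMap A.mulVecLin)

end InfluenceFunction

theorem vecm_sub {k : ℕ} (M N : Matrix (Fin k) (Fin k) ℝ) : vecm (M - N) = vecm M - vecm N :=
  rfl

theorem vecm_smul {k : ℕ} (c : ℝ) (M : Matrix (Fin k) (Fin k) ℝ) : vecm (c • M) = c • vecm M :=
  rfl

theorem kronecker_mulVec_vecm {k : ℕ} (A B X : Matrix (Fin k) (Fin k) ℝ) :
    (A ⊗ₖ B) *ᵥ vecm X = vecm (B * X * Aᵀ) := by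
  ext ⟨j, i⟩
  simp only [vecm, mulVec, dotProduct, Fintype.sum_prod_type, kroneckerMap_apply, mul_apply,
    transpose_apply, Finset.sum_mul]
  exact Finset.sum_congr rfl fun _ _ => Finset.sum_congr rfl fun _ _ => by ring

namespace Matrix

variable {m n : Type*} [Fintype n]

theorem mulVec_injective_of_rank_eq_card_width {K : Type*} [Field K] {A : Matrix m n K}
    (hA : A.rank = Fintype.card n) : Function.Injective A.mulVec := by
  have hker : Module.finrank K (LinearMap.ker A.mulVecLin) = 0 := by
    have := A.mulVecLin.finrank_range_add_finrank_ker
    rw [Module.finrank_fintype_fun_eq_card, ← rank] at this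
    omega
  exact LinearMap.ker_eq_bot.mp (Submodule.finrank_eq_zero.mp hker)

theorem mul_inv_mul_transpose_mul_mul_self [Fintype m] [DecidableEq n] {R : Type*} [CommRing R]
    {K : Matrix m m R} {L : Matrix m n R}
    (h : IsUnit (Lᵀ * K * L).det) :
    L * (Lᵀ * K * L)⁻¹ * Lᵀ * K * L = L := by
  have hinv : (Lᵀ * K * L)⁻¹ * (Lᵀ * K * L) = 1 := nonsing_inv_mul _ h
  simp only [Matrix.mul_assoc] at hinv ⊢
  rw [hinv, Matrix.mul_one]

theorem PosDef.isUnit_det_transpose_mul_mul [Fintype m] [DecidableEq n] {K : Matrix m m ℝ}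
    (hK : K.PosDef) {L : Matrix m n ℝ} (hL : Function.Injective L.mulVec) :
    IsUnit (Lᵀ * K * L).det := by
  have hpos := hK.conjTranspose_mul_mul_same hL
  rw [conjTranspose_eq_transpose_of_trivial] at hpos
  exact hpos.det_pos.ne'.isUnit

end Matrix

theorem IF_structured_covariance_general {k l : ℕ}
    (S : Matrix (Fin k) (Fin k) ℝ) (hS : S.PosDef)
    (μv : Fin k → ℝ)
    (θ₀ : Fin l → ℝ)
    (L : Matrix (Fin k × Fin k) (Fin l) ℝ)
    (hvec : vecm S = L.mulVec θ₀)
    (hrank : L.rank = l)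
    (P : Measure (Fin k → ℝ))
    (C : Measure (Fin k → ℝ) → Matrix (Fin k) (Fin k) ℝ)
    (αC βC : ℝ → ℝ)
    (hIF : ∀ y : Fin k → ℝ,
      HasIF (fun Q => vecm (C Q)) P y
        (vecm (αC (Real.sqrt ((y - μv) ⬝ᵥ S⁻¹.mulVec (y - μv))) • vecMulVec (y - μv) (y - μv)
          - βC (Real.sqrt ((y - μv) ⬝ᵥ S⁻¹.mulVec (y - μv))) • S))) :
    ∀ y : Fin k → ℝ,
      HasIF
        (fun Q => (L * (Lᵀ * (S⁻¹ ⊗ₖ S⁻¹) * L)⁻¹ * Lᵀ * (S⁻¹ ⊗ₖ S⁻¹)).mulVec (vecm (C Q)))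
        P y
        (αC (Real.sqrt ((y - μv) ⬝ᵥ S⁻¹.mulVec (y - μv))) •
            (L * (Lᵀ * (S⁻¹ ⊗ₖ S⁻¹) * L)⁻¹ * Lᵀ).mulVec
              (vecm (S⁻¹ * vecMulVec (y - μv) (y - μv) * S⁻¹))
          - βC (Real.sqrt ((y - μv) ⬝ᵥ S⁻¹.mulVec (y - μv))) • vecm S) := by
  intro y
  have hGram : IsUnit (Lᵀ * (S⁻¹ ⊗ₖ S⁻¹) * L).det :=
    (hS.inv.kronecker hS.inv).isUnit_det_transpose_mul_mul
      (mulVec_injective_of_rank_eq_card_width (hrank.trans (Fintype.card_fin l).symm))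
  have hfix : (L * (Lᵀ * (S⁻¹ ⊗ₖ S⁻¹) * L)⁻¹ * Lᵀ * (S⁻¹ ⊗ₖ S⁻¹)) *ᵥ vecm S = vecm S := by
    rw [hvec, mulVec_mulVec, mul_inv_mul_transpose_mul_mul_self hGram]
  have hsandwich : ∀ X, (L * (Lᵀ * (S⁻¹ ⊗ₖ S⁻¹) * L)⁻¹ * Lᵀ * (S⁻¹ ⊗ₖ S⁻¹)) *ᵥ vecm X =
      (L * (Lᵀ * (S⁻¹ ⊗ₖ S⁻¹) * L)⁻¹ * Lᵀ) *ᵥ vecm (S⁻¹ * X * S⁻¹) := by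
    intro X
    rw [← mulVec_mulVec, kronecker_mulVec_vecm, (isHermitian_iff_isSymm.mp hS.inv.isHermitian).eq]
  have hIFproj := (hIF y).mulVec (L * (Lᵀ * (S⁻¹ ⊗ₖ S⁻¹) * L)⁻¹ * Lᵀ * (S⁻¹ ⊗ₖ S⁻¹))
  rwa [vecm_sub, vecm_smul, vecm_smul, mulVec_sub, mulVec_smul, mulVec_smul, hsandwich, hfix]
    at hIFproj

/-- Lemma 1(i): let `P` be elliptical with parameters `μ`, `Σ = V(θ₀)` (linear structure,
`L` full column rank) and let `C` be an affine equivariant covariance functional, Fisher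
consistent for `Σ`, with influence function
`IF(y; C, P) = α_C(d(y))(y-μ)(y-μ)ᵀ - β_C(d(y))Σ`.  Then the structured functional `M` with
`vec M = Π_L vec C` has influence function
`IF(y; vec M, P) = α_C(d(y)) L(Lᵀ(Σ⁻¹⊗Σ⁻¹)L)⁻¹Lᵀ vec(Σ⁻¹(y-μ)(y-μ)ᵀΣ⁻¹) - β_C(d(y)) vec Σ`. -/
theorem IF_structured_covariance {k l : ℕ}
    (S : Matrix (Fin k) (Fin k) ℝ) (hS : S.PosDef)
    (μv : Fin k → ℝ)
    (θ₀ : Fin l → ℝ)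
    (L : Matrix (Fin k × Fin k) (Fin l) ℝ)
    (hvec : vecm S = L.mulVec θ₀)
    (hrank : L.rank = l)
    (g : ℝ → ℝ)
    (P : Measure (Fin k → ℝ)) [IsProbabilityMeasure P]
    (hell : P = MeasureTheory.volume.withDensity fun y =>
      ENNReal.ofReal ((Real.sqrt S.det)⁻¹ * g ((y - μv) ⬝ᵥ S⁻¹.mulVec (y - μv))))
    (C : Measure (Fin k → ℝ) → Matrix (Fin k) (Fin k) ℝ)
    (haff : ∀ (A : Matrix (Fin k) (Fin k) ℝ), IsUnit A.det → ∀ b : Fin k → ℝ,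
      ∀ Q : Measure (Fin k → ℝ), IsProbabilityMeasure Q →
        C (Q.map fun x => A.mulVec x + b) = A * C Q * Aᵀ)
    (hFisher : C P = S)
    (αC βC : ℝ → ℝ)
    (hIF : ∀ y : Fin k → ℝ,
      HasIF (fun Q => vecm (C Q)) P y
        (vecm (αC (Real.sqrt ((y - μv) ⬝ᵥ S⁻¹.mulVec (y - μv))) • vecMulVec (y - μv) (y - μv)
          - βC (Real.sqrt ((y - μv) ⬝ᵥ S⁻¹.mulVec (y - μv))) • S))) :
    ∀ y : Fin k → ℝ,
      HasIF
        (fun Q => (L * (Lᵀ * (S⁻¹ ⊗ₖ S⁻¹) * L)⁻¹ * Lᵀ * (S⁻¹ ⊗ₖ S⁻¹)).mulVec (vecm (C Q)))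
        P y
        (αC (Real.sqrt ((y - μv) ⬝ᵥ S⁻¹.mulVec (y - μv))) •
            (L * (Lᵀ * (S⁻¹ ⊗ₖ S⁻¹) * L)⁻¹ * Lᵀ).mulVec
              (vecm (S⁻¹ * vecMulVec (y - μv) (y - μv) * S⁻¹))
          - βC (Real.sqrt ((y - μv) ⬝ᵥ S⁻¹.mulVec (y - μv))) • vecm S) :=
  IF_structured_covariance_general S hS μv θ₀ L hvec hrank P C αC βC hIF
end
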